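/- Let L be a modular lattice, d, e, f ∈ L with d ⊓ (e ⊔ f) ≠ (d ⊓ e) ⊔ (d ⊓ f). Define p = (d ⊓ e) ⊔ (e ⊓ f) ⊔ (f ⊓ d), q = (d ⊔ e) ⊓ (e ⊔ f) ⊓ (f ⊔ d), u = (d ⊓ q) ⊔ p, v = (e ⊓ q) ⊔ p, w = (f ⊓ q) ⊔ p. Then the set {p, q, u, v, w} is a sublattice of L isomorphic to the diamond M3 (i.e., u ⊓ v = v ⊓ w = w ⊓ u = p, u ⊔ v = v ⊔ w = w ⊔ u = q, and all five elements are distinct). -/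

import Mathlib

/-!
By the modular law `u = (d ⊓ q) ⊔ p` is also `(d ⊔ (e ⊓ f)) ⊓ q`. The modular law further gives
`(d ⊔ (e ⊓ f)) ⊓ (e ⊔ (f ⊓ d)) = p` and dually `(d ⊓ (e ⊔ f)) ⊔ (e ⊓ (f ⊔ d)) = q`; hence
`u ⊓ v = p` and `u ⊔ v = q`, and the other pairs follow by cyclic symmetry. Since
`d ⊓ q = d ⊓ (e ⊔ f)` and `d ⊓ p = (d ⊓ e) ⊔ (d ⊓ f)`, failure of distributivity forces `p ≠ q`,
and three elements with pairwise meets `p` and pairwise joins `q ≠ p` are distinct from each other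
and from `p` and `q`.
-/

section Lattice

variable {α : Type*} [Lattice α]

def lowerMedian (a b c : α) : α := a ⊓ b ⊔ b ⊓ c ⊔ c ⊓ a

def upperMedian (a b c : α) : α := (a ⊔ b) ⊓ (b ⊔ c) ⊓ (c ⊔ a)

def medianAtom (a b c x : α) : α := x ⊓ upperMedian a b c ⊔ lowerMedian a b c

theorem lowerMedian_rotate (a b c : α) : lowerMedian b c a = lowerMedian a b c := by
  simp only [lowerMedian]; ac_rfl

theorem upperMedian_rotate (a b c : α) : upperMedian b c a = upperMedian a b c := by
  simp only [upperMedian]; ac_rfl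

theorem medianAtom_rotate (a b c : α) : medianAtom b c a = medianAtom a b c := by
  funext x
  rw [medianAtom, medianAtom, upperMedian_rotate, lowerMedian_rotate]

theorem lowerMedian_le_upperMedian (a b c : α) : lowerMedian a b c ≤ upperMedian a b c := by
  simp only [lowerMedian, upperMedian, sup_le_iff, le_inf_iff]
  aesop

theorem inf_upperMedian (a b c : α) : a ⊓ upperMedian a b c = a ⊓ (b ⊔ c) :=
  le_antisymm (inf_le_inf_left a (inf_le_left.trans inf_le_right))
    (le_inf inf_le_left (le_inf (le_inf (inf_le_left.trans le_sup_left) inf_le_right)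
      (inf_le_left.trans le_sup_right)))

theorem sup_lowerMedian (a b c : α) : a ⊔ lowerMedian a b c = a ⊔ b ⊓ c :=
  inf_upperMedian (α := αᵒᵈ) a b c

theorem ne_of_inf_eq_of_sup_eq {p q x y : α} (hpq : p ≠ q) (hinf : x ⊓ y = p)
    (hsup : x ⊔ y = q) : x ≠ y := by
  rintro rfl
  rw [inf_idem] at hinf
  rw [sup_idem] at hsup
  exact hpq (hinf.symm.trans hsup)

theorem ne_left_of_inf_eq_of_sup_eq {p q x y z : α} (hpq : p ≠ q)
    (hxy : x ⊓ y = p) (hyz : y ⊓ z = p) (hxy' : x ⊔ y = q) (hzx' : z ⊔ x = q) : p ≠ x := by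
  rintro rfl
  have hy : y = q := by rwa [sup_eq_right.2 (inf_eq_left.1 hxy)] at hxy'
  have hz : z = p := by rwa [hy, inf_eq_right.2 (le_sup_left.trans hzx'.le)] at hyz
  rw [hz, sup_idem] at hzx'
  exact hpq hzx'

theorem pairwise_distinct_of_inf_eq_of_sup_eq {p q u v w : α} (hpq : p ≠ q)
    (huv : u ⊓ v = p) (hvw : v ⊓ w = p) (hwu : w ⊓ u = p)
    (huv' : u ⊔ v = q) (hvw' : v ⊔ w = q) (hwu' : w ⊔ u = q) :
    p ≠ u ∧ p ≠ v ∧ p ≠ w ∧ q ≠ u ∧ q ≠ v ∧ q ≠ w ∧ u ≠ v ∧ u ≠ w ∧ v ≠ w :=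
  ⟨ne_left_of_inf_eq_of_sup_eq hpq huv hvw huv' hwu',
    ne_left_of_inf_eq_of_sup_eq hpq hvw hwu hvw' huv',
    ne_left_of_inf_eq_of_sup_eq hpq hwu huv hwu' hvw',
    ne_left_of_inf_eq_of_sup_eq (α := αᵒᵈ) hpq.symm huv' hvw' huv hwu,
    ne_left_of_inf_eq_of_sup_eq (α := αᵒᵈ) hpq.symm hvw' hwu' hvw huv,
    ne_left_of_inf_eq_of_sup_eq (α := αᵒᵈ) hpq.symm hwu' huv' hwu hvw,
    ne_of_inf_eq_of_sup_eq hpq huv huv',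
    (ne_of_inf_eq_of_sup_eq hpq hwu hwu').symm,
    ne_of_inf_eq_of_sup_eq hpq hvw hvw'⟩

end Lattice

section ModularLattice

variable {α : Type*} [Lattice α] [IsModularLattice α]

theorem inf_lowerMedian (a b c : α) : a ⊓ lowerMedian a b c = a ⊓ b ⊔ a ⊓ c := by
  have hle : a ⊓ b ⊔ c ⊓ a ≤ a := sup_le inf_le_left inf_le_right
  calc a ⊓ lowerMedian a b c = (a ⊓ b ⊔ c ⊓ a ⊔ b ⊓ c) ⊓ a := by
        simp only [lowerMedian]; ac_rfl
    _ = a ⊓ b ⊔ c ⊓ a ⊔ b ⊓ c ⊓ a := sup_inf_assoc_of_le _ hle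
    _ = a ⊓ b ⊔ a ⊓ c := by
        rw [sup_eq_left.2 ((inf_le_inf_right a inf_le_right).trans le_sup_right), inf_comm c]

theorem lowerMedian_ne_upperMedian {a b c : α} (h : a ⊓ (b ⊔ c) ≠ a ⊓ b ⊔ a ⊓ c) :
    lowerMedian a b c ≠ upperMedian a b c := fun hpq ↦
  h (by rw [← inf_upperMedian, ← hpq, inf_lowerMedian])

theorem sup_inf_sup_eq_lowerMedian (a b c : α) :
    (a ⊔ b ⊓ c) ⊓ (b ⊔ c ⊓ a) = lowerMedian a b c := by
  have hle : c ⊓ a ≤ a ⊔ b ⊓ c := inf_le_right.trans le_sup_left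
  calc (a ⊔ b ⊓ c) ⊓ (b ⊔ c ⊓ a) = (c ⊓ a ⊔ b) ⊓ (a ⊔ b ⊓ c) := by rw [inf_comm, sup_comm b]
    _ = c ⊓ a ⊔ b ⊓ (a ⊔ b ⊓ c) := sup_inf_assoc_of_le b hle
    _ = c ⊓ a ⊔ (b ⊓ c ⊔ a ⊓ b) := by
        rw [inf_comm b, sup_comm a, sup_inf_assoc_of_le a inf_le_left, inf_comm a]
    _ = lowerMedian a b c := by simp only [lowerMedian]; ac_rfl

theorem inf_sup_inf_eq_upperMedian (a b c : α) :
    a ⊓ (b ⊔ c) ⊔ b ⊓ (c ⊔ a) = upperMedian a b c :=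
  sup_inf_sup_eq_lowerMedian (α := αᵒᵈ) a b c

theorem medianAtom_self (a b c : α) :
    medianAtom a b c a = (a ⊔ b ⊓ c) ⊓ upperMedian a b c := by
  rw [medianAtom, ← sup_lowerMedian, sup_comm a,
    sup_inf_assoc_of_le _ (lowerMedian_le_upperMedian a b c), sup_comm]

theorem medianAtom_inf_medianAtom (a b c : α) :
    medianAtom a b c a ⊓ medianAtom a b c b = lowerMedian a b c := by
  have hb : medianAtom a b c b = (b ⊔ c ⊓ a) ⊓ upperMedian a b c := by
    rw [← medianAtom_rotate, medianAtom_self, upperMedian_rotate]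
  rw [medianAtom_self, hb, ← inf_inf_distrib_right, sup_inf_sup_eq_lowerMedian,
    inf_eq_left.2 (lowerMedian_le_upperMedian a b c)]

theorem medianAtom_sup_medianAtom (a b c : α) :
    medianAtom a b c a ⊔ medianAtom a b c b = upperMedian a b c := by
  have hb : b ⊓ upperMedian a b c = b ⊓ (c ⊔ a) := by
    rw [← upperMedian_rotate, inf_upperMedian]
  rw [medianAtom, medianAtom, ← sup_sup_distrib_right, inf_upperMedian, hb,
    inf_sup_inf_eq_upperMedian, sup_eq_left.2 (lowerMedian_le_upperMedian a b c)]

theorem medianAtom_pairwise_inf (a b c : α) :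
    medianAtom a b c a ⊓ medianAtom a b c b = lowerMedian a b c ∧
      medianAtom a b c b ⊓ medianAtom a b c c = lowerMedian a b c ∧
      medianAtom a b c c ⊓ medianAtom a b c a = lowerMedian a b c := by
  refine ⟨medianAtom_inf_medianAtom a b c, ?_, ?_⟩
  · rw [← medianAtom_rotate, ← lowerMedian_rotate]
    exact medianAtom_inf_medianAtom b c a
  · rw [← medianAtom_rotate, ← medianAtom_rotate, ← lowerMedian_rotate, ← lowerMedian_rotate]
    exact medianAtom_inf_medianAtom c a b

theorem medianAtom_pairwise_sup (a b c : α) :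
    medianAtom a b c a ⊔ medianAtom a b c b = upperMedian a b c ∧
      medianAtom a b c b ⊔ medianAtom a b c c = upperMedian a b c ∧
      medianAtom a b c c ⊔ medianAtom a b c a = upperMedian a b c := by
  refine ⟨medianAtom_sup_medianAtom a b c, ?_, ?_⟩
  · rw [← medianAtom_rotate, ← upperMedian_rotate]
    exact medianAtom_sup_medianAtom b c a
  · rw [← medianAtom_rotate, ← medianAtom_rotate, ← upperMedian_rotate, ← upperMedian_rotate]
    exact medianAtom_sup_medianAtom c a b

end ModularLattice

theorem diamond_sublattice {L : Type*} [Lattice L] [IsModularLattice L] (d e f : L)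
    (h : d ⊓ (e ⊔ f) ≠ (d ⊓ e) ⊔ (d ⊓ f)) :
    let p := (d ⊓ e) ⊔ (e ⊓ f) ⊔ (f ⊓ d)
    let q := (d ⊔ e) ⊓ (e ⊔ f) ⊓ (f ⊔ d)
    let u := (d ⊓ q) ⊔ p
    let v := (e ⊓ q) ⊔ p
    let w := (f ⊓ q) ⊔ p
    u ⊓ v = p ∧ v ⊓ w = p ∧ w ⊓ u = p ∧
    u ⊔ v = q ∧ v ⊔ w = q ∧ w ⊔ u = q ∧
    (p ≠ q ∧ p ≠ u ∧ p ≠ v ∧ p ≠ w ∧ q ≠ u ∧ q ≠ v ∧ q ≠ w ∧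
      u ≠ v ∧ u ≠ w ∧ v ≠ w) := by
  intro p q u v w
  obtain ⟨huv, hvw, hwu⟩ := medianAtom_pairwise_inf d e f
  obtain ⟨huv', hvw', hwu'⟩ := medianAtom_pairwise_sup d e f
  have hpq : p ≠ q := lowerMedian_ne_upperMedian h
  exact ⟨huv, hvw, hwu, huv', hvw', hwu', hpq,
    pairwise_distinct_of_inf_eq_of_sup_eq hpq huv hvw hwu huv' hvw' hwu'⟩
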